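/- Suppose η_n → 0, √n·η_n → ∞, θ_n/η_n → 1, and √n(η_n − θ_n) → r ∈ ℝ. Then the distribution of η_n^{-1}(θ̂_H − θ_n) under P_{n,θ_n} converges weakly to Φ(r)·δ_{−1} + (1 − Φ(r))·δ_0. -/

import Mathlib

/-!
For a fixed standard normal `z`, put `ȳ = θₙ + z / √n`. If `z < r` then eventually
`-(ηₙ + θₙ)√n < z < (ηₙ - θₙ)√n`, so `|ȳ| ≤ ηₙ`, the estimate is killed and the rescaled error is
`-θₙ / ηₙ → -1`; if `z > r` then eventually `ȳ > ηₙ`, the estimate is kept and the rescaled error is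
`z / (√n ηₙ) → 0`. Hence the rescaled error converges almost surely to `-𝟙{Z ≤ r}`, whose law is
`Φ(r) δ₋₁ + (1 - Φ(r)) δ₀`, and almost sure convergence implies convergence in distribution.
-/

open MeasureTheory ProbabilityTheory Real Filter Topology Set

noncomputable def stdGauss : Measure ℝ := gaussianReal 0 1

/-- Standard normal cdf. -/
noncomputable def Phi (x : ℝ) : ℝ := (stdGauss (Set.Iic x)).toReal

/-- Standard normal density. -/
noncomputable def phi (x : ℝ) : ℝ := gaussianPDFReal 0 1 x

/-- Hard-thresholding estimator. -/
noncomputable def hardThresh (η y : ℝ) : ℝ := if η < |y| then y else 0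

/-- Soft-thresholding (LASSO) estimator. -/
noncomputable def softThresh (η y : ℝ) : ℝ := Real.sign y * max (|y| - η) 0

/-- SCAD estimator. -/
noncomputable def scadThresh (a η y : ℝ) : ℝ :=
  if |y| ≤ 2 * η then Real.sign y * max (|y| - η) 0
  else if |y| ≤ a * η then ((a - 1) * y - Real.sign y * a * η) / (a - 2)
  else y

theorem MeasureTheory.Measure.map_indicator_const {α β : Type*} [MeasurableSpace α]
    [MeasurableSpace β] [Zero β] (μ : Measure α) {A : Set α} (hA : MeasurableSet A) (b : β) :
    μ.map (A.indicator fun _ ↦ b) = μ A • Measure.dirac b + μ Aᶜ • Measure.dirac 0 := by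
  have hm : Measurable (A.indicator fun _ ↦ b) := measurable_const.indicator hA
  conv_lhs => rw [← Measure.restrict_add_restrict_compl (μ := μ) hA]
  rw [Measure.map_add _ _ hm,
    Measure.map_congr (ae_restrict_of_forall_mem hA fun x hx ↦ Set.indicator_of_mem hx _),
    Measure.map_congr
      (ae_restrict_of_forall_mem hA.compl fun x hx ↦ Set.indicator_of_notMem hx _),
    Measure.map_const, Measure.map_const, Measure.restrict_apply_univ,
    Measure.restrict_apply_univ]

instance : IsProbabilityMeasure stdGauss := by unfold stdGauss; infer_instance

lemma ofReal_Phi (r : ℝ) : ENNReal.ofReal (Phi r) = stdGauss (Iic r) :=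
  ENNReal.ofReal_toReal (measure_ne_top _ _)

lemma ofReal_one_sub_Phi (r : ℝ) : ENNReal.ofReal (1 - Phi r) = stdGauss (Iic r)ᶜ := by
  rw [prob_compl_eq_one_sub measurableSet_Iic,
    ENNReal.ofReal_sub 1 (q := Phi r) ENNReal.toReal_nonneg, ENNReal.ofReal_one, ofReal_Phi]

lemma stdGauss_ae_ne (r : ℝ) : ∀ᵐ z ∂stdGauss, z ≠ r :=
  (gaussianReal_absolutelyContinuous 0 one_ne_zero).ae_le
    (compl_mem_ae_iff.2 (measure_singleton r))

noncomputable def scaledHardThreshError (η θ s z : ℝ) : ℝ := η⁻¹ * (hardThresh η (θ + z / s) - θ)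

lemma measurable_hardThresh (η : ℝ) : Measurable (hardThresh η) :=
  Measurable.ite (measurableSet_lt measurable_const measurable_abs) measurable_id measurable_const

lemma measurable_scaledHardThreshError (η θ s : ℝ) : Measurable (scaledHardThreshError η θ s) :=
  measurable_const.mul
    (((measurable_hardThresh η).comp (measurable_const.add (measurable_id.div_const _))).sub
      measurable_const)

lemma scaledHardThreshError_of_mem_Ioo {η θ s z : ℝ} (hs : 0 < s)
    (hz : z ∈ Ioo (-(η + θ) * s) ((η - θ) * s)) :
    scaledHardThreshError η θ s z = -(θ / η) := by
  have hkill : |θ + z / s| ≤ η := by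
    rw [abs_le]
    constructor
    · linarith [(le_div_iff₀ hs).2 hz.1.le]
    · linarith [(div_le_iff₀ hs).2 hz.2.le]
  simp only [scaledHardThreshError, hardThresh, if_neg (not_lt.2 hkill)]
  ring

lemma scaledHardThreshError_of_lt {η θ s z : ℝ} (hs : 0 < s) (hz : (η - θ) * s < z) :
    scaledHardThreshError η θ s z = z / (s * η) := by
  have hkeep : η < |θ + z / s| :=
    (by linarith [(lt_div_iff₀ hs).2 hz] : η < θ + z / s).trans_le (le_abs_self _)
  simp only [scaledHardThreshError, hardThresh, if_pos hkeep, add_sub_cancel_left]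
  field_simp

section Asymptotics

variable {ι : Type*} {l : Filter ι} {η θ s : ι → ℝ} {r z : ℝ}

lemma tendsto_scaledHardThreshError_of_lt (hs : ∀ᶠ i in l, 0 < s i)
    (hsum : Tendsto (fun i ↦ s i * (η i + θ i)) l atTop)
    (hθη : Tendsto (fun i ↦ θ i / η i) l (𝓝 1))
    (hr : Tendsto (fun i ↦ s i * (η i - θ i)) l (𝓝 r)) (hz : z < r) :
    Tendsto (fun i ↦ scaledHardThreshError (η i) (θ i) (s i) z) l (𝓝 (-1)) := by
  refine hθη.neg.congr' ?_
  filter_upwards [hs, hsum.eventually_gt_atTop (-z), hr.eventually_const_lt hz] with i hsi h1 h2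
  exact (scaledHardThreshError_of_mem_Ioo hsi ⟨by linarith, by linarith⟩).symm

lemma tendsto_scaledHardThreshError_of_gt (hs : ∀ᶠ i in l, 0 < s i)
    (hsη : Tendsto (fun i ↦ s i * η i) l atTop)
    (hr : Tendsto (fun i ↦ s i * (η i - θ i)) l (𝓝 r)) (hz : r < z) :
    Tendsto (fun i ↦ scaledHardThreshError (η i) (θ i) (s i) z) l (𝓝 0) := by
  have hlim : Tendsto (fun i ↦ z / (s i * η i)) l (𝓝 0) := by
    simpa [div_eq_mul_inv] using hsη.inv_tendsto_atTop.const_mul z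
  refine hlim.congr' ?_
  filter_upwards [hs, hr.eventually_lt_const hz] with i hsi hi
  exact (scaledHardThreshError_of_lt hsi (by linarith)).symm

lemma tendsto_scaledHardThreshError (hs : ∀ᶠ i in l, 0 < s i) (hη : ∀ i, 0 < η i)
    (hsη : Tendsto (fun i ↦ s i * η i) l atTop) (hθη : Tendsto (fun i ↦ θ i / η i) l (𝓝 1))
    (hr : Tendsto (fun i ↦ s i * (η i - θ i)) l (𝓝 r)) (hz : z ≠ r) :
    Tendsto (fun i ↦ scaledHardThreshError (η i) (θ i) (s i) z) l
      (𝓝 ((Iic r).indicator (fun _ ↦ -1) z)) := by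
  rcases hz.lt_or_gt with hz | hz
  · have hsum : Tendsto (fun i ↦ s i * (η i + θ i)) l atTop := by
      have h2 : Tendsto (fun i ↦ 1 + θ i / η i) l (𝓝 2) := by
        simpa [one_add_one_eq_two] using hθη.const_add 1
      refine (hsη.atTop_mul_pos two_pos h2).congr fun i ↦ ?_
      field_simp [(hη i).ne']
    simpa [hz.le] using tendsto_scaledHardThreshError_of_lt hs hsum hθη hr hz
  · simpa [not_le.2 hz] using tendsto_scaledHardThreshError_of_gt hs hsη hr hz

end Asymptotics

theorem stmt_19_general (η θ : ℕ → ℝ) (hηpos : ∀ n, 0 < η n) (r : ℝ)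
    (hηe : Tendsto (fun n : ℕ => Real.sqrt n * η n) atTop atTop)
    (hθζ : Tendsto (fun n => θ n / η n) atTop (𝓝 1))
    (hr : Tendsto (fun n : ℕ => Real.sqrt n * (η n - θ n)) atTop (𝓝 r)) :
    ∀ f : BoundedContinuousFunction ℝ ℝ,
      Tendsto (fun n : ℕ => ∫ x, f x ∂(Measure.map
            (fun z => (η n)⁻¹ * (hardThresh (η n) (θ n + z / Real.sqrt n) - θ n)) stdGauss))
        atTop
        (𝓝 (∫ x, f x ∂(ENNReal.ofReal (Phi r) • Measure.dirac (-1 : ℝ)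
            + ENNReal.ofReal (1 - Phi r) • Measure.dirac (0 : ℝ)))) := by
  have hsqrt : ∀ᶠ n : ℕ in atTop, 0 < Real.sqrt n :=
    (eventually_gt_atTop 0).mono fun n hn ↦ Real.sqrt_pos.2 (by exact_mod_cast hn)
  have hlaw : TendstoInDistribution (fun n ↦ scaledHardThreshError (η n) (θ n) (Real.sqrt n))
      atTop ((Iic r).indicator fun _ ↦ -1) (fun _ ↦ stdGauss) stdGauss :=
    tendstoInDistribution_of_ae_tendsto
      (fun n ↦ (measurable_scaledHardThreshError _ _ _).aemeasurable)
      (measurable_const.indicator measurableSet_Iic).aemeasurable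
      ((stdGauss_ae_ne r).mono fun z hz ↦
        tendsto_scaledHardThreshError hsqrt hηpos hηe hθζ hr hz)
  rw [ofReal_Phi, ofReal_one_sub_Phi, ← Measure.map_indicator_const _ measurableSet_Iic]
  exact ProbabilityMeasure.tendsto_iff_forall_integral_tendsto.1 hlaw.tendsto

theorem stmt_19 (η θ : ℕ → ℝ) (hηpos : ∀ n, 0 < η n) (r : ℝ)
    (hη0 : Tendsto η atTop (𝓝 0))
    (hηe : Tendsto (fun n : ℕ => Real.sqrt n * η n) atTop atTop)
    (hθζ : Tendsto (fun n => θ n / η n) atTop (𝓝 1))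
    (hr : Tendsto (fun n : ℕ => Real.sqrt n * (η n - θ n)) atTop (𝓝 r)) :
    ∀ f : BoundedContinuousFunction ℝ ℝ,
      Tendsto (fun n : ℕ => ∫ x, f x ∂(Measure.map
            (fun z => (η n)⁻¹ * (hardThresh (η n) (θ n + z / Real.sqrt n) - θ n)) stdGauss))
        atTop
        (𝓝 (∫ x, f x ∂(ENNReal.ofReal (Phi r) • Measure.dirac (-1 : ℝ)
            + ENNReal.ofReal (1 - Phi r) • Measure.dirac (0 : ℝ)))) :=
  stmt_19_general η θ hηpos r hηe hθζ hr
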